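/- Let p ≥ 1, let T be a bounded linear operator on L^p(ℝ^m; ℝⁿ) (with Lebesgue measure) that commutes with all translation operators τ_v : u ↦ u(· + v), and let h : ℝⁿ → ℝⁿ be Lipschitz with constant τ, h(0) = 0, where τ · ‖T‖_p ≤ 1/2. Suppose u, g ∈ L^p(ℝ^m; ℝⁿ) satisfy u = −T(h ∘ u) + g, and suppose there are L > 0 and r > 0 such that ‖g(· + v) − g‖_{L^p} ≤ L |v| for all v ∈ ℝ^m with |v| ≤ r. Then ‖u(· + v) − u‖_{L^p} ≤ 2L |v| for all v with |v| ≤ r. -/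

import Mathlib

/-!
Translation by `v` commutes with `T` by hypothesis and with the Nemytskii operator `w ↦ h ∘ w`
pointwise, so `τ_v u` solves the same equation as `u` with data `τ_v g`. The solution map of
`u = -T(h ∘ u) + g` is `(1 - τ‖T‖)⁻¹`-Lipschitz in `g`, hence with `τ‖T‖ ≤ 1/2` the finite
difference of `u` is at most twice that of `g`.
-/

open MeasureTheory
open scoped ENNReal NNReal

theorem LipschitzWith.mul_norm_sub_le_of_eq_add {E : Type*} [SeminormedAddCommGroup E]
    {F : E → E} {K : ℝ≥0} (hF : LipschitzWith K F) {x y g k : E}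
    (hx : x = F x + g) (hy : y = F y + k) :
    (1 - K) * ‖x - y‖ ≤ ‖g - k‖ := by
  have hdiff : x - y = (F x - F y) + (g - k) := by
    conv_lhs => rw [hx, hy]
    abel
  have : ‖x - y‖ ≤ K * ‖x - y‖ + ‖g - k‖ :=
    calc ‖x - y‖ ≤ ‖F x - F y‖ + ‖g - k‖ := hdiff ▸ norm_add_le _ _
      _ ≤ K * ‖x - y‖ + ‖g - k‖ := by gcongr; exact hF.norm_sub_le x y
  linarith

theorem LipschitzWith.compLp_map_eq_of_ae_eq_comp {α E F : Type*} [MeasurableSpace α]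
    {μ : Measure α} {p : ℝ≥0∞} [NormedAddCommGroup E] [NormedAddCommGroup F]
    {h : E → F} {c : ℝ≥0} (hLip : LipschitzWith c h) (h0 : h 0 = 0)
    {φ : α → α} (hφ : Measure.QuasiMeasurePreserving φ μ μ)
    {SE : Lp E p μ → Lp E p μ} {SF : Lp F p μ → Lp F p μ}
    (hSE : ∀ w, SE w =ᵐ[μ] w ∘ φ) (hSF : ∀ w, SF w =ᵐ[μ] w ∘ φ) (u : Lp E p μ) :
    SF (hLip.compLp h0 u) = hLip.compLp h0 (SE u) := by
  apply Lp.ext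
  calc (SF (hLip.compLp h0 u) : α → F)
      =ᵐ[μ] (hLip.compLp h0 u : α → F) ∘ φ := hSF _
    _ =ᵐ[μ] (h ∘ u) ∘ φ := hφ.ae_eq_comp (hLip.coeFn_compLp h0 u)
    _ =ᵐ[μ] h ∘ SE u := (hSE u).fun_comp h |>.symm
    _ =ᵐ[μ] hLip.compLp h0 (SE u) := (hLip.coeFn_compLp h0 (SE u)).symm

theorem bishop_finite_difference_bound_general {m n : ℕ} (p : ℝ≥0∞) [Fact (1 ≤ p)]
    (T : Lp (EuclideanSpace ℝ (Fin n)) p (volume : Measure (EuclideanSpace ℝ (Fin m))) →L[ℝ]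
         Lp (EuclideanSpace ℝ (Fin n)) p (volume : Measure (EuclideanSpace ℝ (Fin m))))
    -- the translation operators τ_v
    (S : EuclideanSpace ℝ (Fin m) →
      Lp (EuclideanSpace ℝ (Fin n)) p (volume : Measure (EuclideanSpace ℝ (Fin m))) →L[ℝ]
      Lp (EuclideanSpace ℝ (Fin n)) p (volume : Measure (EuclideanSpace ℝ (Fin m))))
    (hS : ∀ v w, (S v w : EuclideanSpace ℝ (Fin m) → EuclideanSpace ℝ (Fin n))
      =ᵐ[volume] fun x => w (x + v))
    -- T commutes with all translations
    (hTS : ∀ v w, T (S v w) = S v (T w))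
    (h : EuclideanSpace ℝ (Fin n) → EuclideanSpace ℝ (Fin n)) (τ : ℝ≥0)
    (hLip : LipschitzWith τ h) (h0 : h 0 = 0) (hsmall : (τ : ℝ) * ‖T‖ ≤ 1 / 2)
    (u g : Lp (EuclideanSpace ℝ (Fin n)) p (volume : Measure (EuclideanSpace ℝ (Fin m))))
    (hu : u = -T (hLip.compLp h0 u) + g)
    (L r : ℝ)
    (hg : ∀ v : EuclideanSpace ℝ (Fin m), ‖v‖ ≤ r → ‖S v g - g‖ ≤ L * ‖v‖) :
    ∀ v : EuclideanSpace ℝ (Fin m), ‖v‖ ≤ r → ‖S v u - u‖ ≤ 2 * L * ‖v‖ := by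
  intro v hv
  have hcomm : S v (hLip.compLp h0 u) = hLip.compLp h0 (S v u) :=
    hLip.compLp_map_eq_of_ae_eq_comp h0
      (measurePreserving_add_right volume v).quasiMeasurePreserving (hS v) (hS v) u
  have hshift : S v u = -T (hLip.compLp h0 (S v u)) + S v g := by
    conv_lhs => rw [hu]
    rw [map_add, map_neg, ← hTS, hcomm]
  have hsolve : LipschitzWith (‖T‖₊ * τ) fun w => -T (hLip.compLp h0 w) :=
    (T.lipschitz.comp (hLip.lipschitzWith_compLp h0)).neg
  have hstable := hsolve.mul_norm_sub_le_of_eq_add hshift hu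
  have hhalf : (1 / 2 : ℝ) * ‖S v u - u‖ ≤ (1 - ↑(‖T‖₊ * τ)) * ‖S v u - u‖ := by
    gcongr
    push_cast
    linarith [mul_comm (τ : ℝ) ‖T‖]
  linarith [hg v hv]

/-- Let `p ≥ 1`, let `T` be a bounded linear operator on
`L^p(ℝ^m; ℝⁿ)` (Lebesgue measure) commuting with all translation operators
`τ_v : u ↦ u(·+v)`, and let `h : ℝⁿ → ℝⁿ` be Lipschitz with constant `τ`, `h(0)=0`,
`τ·‖T‖ ≤ 1/2`.  If `u = −T(h∘u) + g` and `‖g(·+v) − g‖_{L^p} ≤ L|v|` for all `|v| ≤ r`,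
then `‖u(·+v) − u‖_{L^p} ≤ 2L|v|` for all `|v| ≤ r`.
Here the translation operators are axiomatized as any family `S` of bounded operators
on `L^p` with `(S v u)(x) = u(x+v)` almost everywhere. -/
theorem bishop_finite_difference_bound {m n : ℕ} (p : ℝ≥0∞) [Fact (1 ≤ p)]
    (T : Lp (EuclideanSpace ℝ (Fin n)) p (volume : Measure (EuclideanSpace ℝ (Fin m))) →L[ℝ]
         Lp (EuclideanSpace ℝ (Fin n)) p (volume : Measure (EuclideanSpace ℝ (Fin m))))
    -- the translation operators τ_v
    (S : EuclideanSpace ℝ (Fin m) →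
      Lp (EuclideanSpace ℝ (Fin n)) p (volume : Measure (EuclideanSpace ℝ (Fin m))) →L[ℝ]
      Lp (EuclideanSpace ℝ (Fin n)) p (volume : Measure (EuclideanSpace ℝ (Fin m))))
    (hS : ∀ v w, (S v w : EuclideanSpace ℝ (Fin m) → EuclideanSpace ℝ (Fin n))
      =ᵐ[volume] fun x => w (x + v))
    -- T commutes with all translations
    (hTS : ∀ v w, T (S v w) = S v (T w))
    (h : EuclideanSpace ℝ (Fin n) → EuclideanSpace ℝ (Fin n)) (τ : ℝ≥0)
    (hLip : LipschitzWith τ h) (h0 : h 0 = 0) (hsmall : (τ : ℝ) * ‖T‖ ≤ 1 / 2)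
    (u g : Lp (EuclideanSpace ℝ (Fin n)) p (volume : Measure (EuclideanSpace ℝ (Fin m))))
    (hu : u = -T (hLip.compLp h0 u) + g)
    (L r : ℝ) (hL : 0 < L) (hr : 0 < r)
    (hg : ∀ v : EuclideanSpace ℝ (Fin m), ‖v‖ ≤ r → ‖S v g - g‖ ≤ L * ‖v‖) :
    ∀ v : EuclideanSpace ℝ (Fin m), ‖v‖ ≤ r → ‖S v u - u‖ ≤ 2 * L * ‖v‖ :=
  bishop_finite_difference_bound_general p T S hS hTS h τ hLip h0 hsmall u g hu L r hg
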